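/- arXiv:1002.4067 — 7 statements merged into one kernel-verified Lean document; each statement's English description precedes it below -/
import Mathlib

section
/- For every initial solution S, m-network R, and metabolite C, there exists an explanation for C with respect to S and R if and only if there exists a uniform explanation for C with respect to S and R. -/
/-- A biochemical rule: either binary `A₁ ∘ A₂ → C` or unary `A → C`. -/
inductive Rule (M : Type) where
  | binary (a₁ a₂ c : M) : Rule M
  | unary (a c : M) : Rule M
  deriving DecidableEq

namespace Rule

/-- The conclusion (produced metabolite) of a rule. -/
def concl {M : Type} : Rule M → M
  | .binary _ _ c => c
  | .unary _ c => c

/-- The premises of a rule, as a finite set. -/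
def premises {M : Type} [DecidableEq M] : Rule M → Finset M
  | .binary a₁ a₂ _ => {a₁, a₂}
  | .unary a _ => {a}

/-- The premises of a rule, as a set. -/
def premSet {M : Type} : Rule M → Set M
  | .binary a₁ a₂ _ => {a₁, a₂}
  | .unary a _ => {a}

end Rule

/-- Explanation trees: leaves `C[]`, unary nodes `C_r[E]`, binary nodes `C_r[E₁,E₂]`. -/
inductive Expl (M : Type) where
  | leaf (c : M) : Expl M
  | node1 (r : Rule M) (e : Expl M) : Expl M
  | node2 (r : Rule M) (e₁ e₂ : Expl M) : Expl M

namespace Expl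

/-- The root metabolite of an explanation. -/
def root {M : Type} : Expl M → M
  | .leaf c => c
  | .node1 r _ => r.concl
  | .node2 r _ _ => r.concl

/-- `ℛ(E)`: the set of rules used by an explanation. -/
def rules {M : Type} : Expl M → Set (Rule M)
  | .leaf _ => ∅
  | .node1 r e => {r} ∪ e.rules
  | .node2 r e₁ e₂ => {r} ∪ e₁.rules ∪ e₂.rules

/-- `ℳ(E)`: the set of metabolites required by an explanation. -/
def mets {M : Type} : Expl M → Set M
  | .leaf c => {c}
  | .node1 r e => r.premSet ∪ e.mets
  | .node2 r e₁ e₂ => r.premSet ∪ e₁.mets ∪ e₂.mets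

/-- Subexplanation (subtree) relation. -/
inductive Sub {M : Type} : Expl M → Expl M → Prop where
  | refl (e : Expl M) : Sub e e
  | node1 {e e' : Expl M} {r : Rule M} : Sub e e' → Sub e (.node1 r e')
  | left {e e₁ e₂ : Expl M} {r : Rule M} : Sub e e₁ → Sub e (.node2 r e₁ e₂)
  | right {e e₁ e₂ : Expl M} {r : Rule M} : Sub e e₂ → Sub e (.node2 r e₁ e₂)

/-- An explanation is uniform if any two subexplanations with the same root metabolite coincide. -/
def Uniform {M : Type} (E : Expl M) : Prop :=
  ∀ e₁ e₂ : Expl M, Sub e₁ E → Sub e₂ E → root e₁ = root e₂ → e₁ = e₂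

end Expl

/-- `IsExpl S R C E`: `E` is an explanation for `C` w.r.t. initial solution `S` and m-network `R`. -/
inductive IsExpl {M : Type} (S : Finset M) (R : Finset (Rule M)) : M → Expl M → Prop where
  | leaf {c : M} : c ∈ S → IsExpl S R c (.leaf c)
  | node1 {a c : M} {e : Expl M} : Rule.unary a c ∈ R → IsExpl S R a e →
      IsExpl S R c (.node1 (Rule.unary a c) e)
  | node2 {a₁ a₂ c : M} {e₁ e₂ : Expl M} : Rule.binary a₁ a₂ c ∈ R →
      IsExpl S R a₁ e₁ → IsExpl S R a₂ e₂ →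
      IsExpl S R c (.node2 (Rule.binary a₁ a₂ c) e₁ e₂)

/-- A rule `r ∈ R` is essential in `S` for `C`. -/
def Essential {M : Type} [DecidableEq M] (S : Finset M) (R : Finset (Rule M))
    (r : Rule M) (C : M) : Prop :=
  (∃ E : Expl M, IsExpl S R C E) ∧ ¬ ∃ E : Expl M, IsExpl S (R.erase r) C E

/-- Rules `r₁, r₂ ∈ R` are mutually essential in `S` for `C`. -/
def MutuallyEssential {M : Type} [DecidableEq M] (S : Finset M) (R : Finset (Rule M))
    (r₁ r₂ : Rule M) (C : M) : Prop :=
  (∃ E : Expl M, IsExpl S (R.erase r₁) C E) ∧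
  (∃ E : Expl M, IsExpl S (R.erase r₂) C E) ∧
  ¬ ∃ E : Expl M, IsExpl S ((R.erase r₁).erase r₂) C E

section Paths

variable {M : Type} [DecidableEq M]

/-- A path in `Gr((R,S₀))`, represented by its list of transition rules from a starting state. -/
inductive IsPath (R : Finset (Rule M)) : Finset M → List (Rule M) → Prop where
  | nil (S : Finset M) : IsPath R S []
  | cons {S : Finset M} {r : Rule M} {rs : List (Rule M)} :
      r ∈ R → r.premises ⊆ S → IsPath R (insert r.concl S) rs → IsPath R S (r :: rs)

/-- A χ-path: a path with no self-loop transitions (each step produces a genuinely new state). -/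
inductive IsChiPath (R : Finset (Rule M)) : Finset M → List (Rule M) → Prop where
  | nil (S : Finset M) : IsChiPath R S []
  | cons {S : Finset M} {r : Rule M} {rs : List (Rule M)} :
      r ∈ R → r.premises ⊆ S → r.concl ∉ S →
      IsChiPath R (insert r.concl S) rs → IsChiPath R S (r :: rs)

/-- `LeadsTo C S rs`: the path `rs` from `S` leads to `C`, i.e. its last produced metabolite
is `C` and its final state is the first state containing `C`. -/
def LeadsTo (C : M) : Finset M → List (Rule M) → Prop
  | _, [] => False
  | S, [r] => C ∉ S ∧ r.concl = C
  | S, r :: rs => C ∉ S ∧ LeadsTo C (insert r.concl S) rs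

/-- The final state of a path. -/
def run (S : Finset M) : List (Rule M) → Finset M
  | [] => S
  | r :: rs => run (insert r.concl S) rs

/-- Auxiliary predicate for ρ-paths: `Xs` accumulates the previously produced metabolites,
`Us` the union of the previous `Ŝᵢ = premises Θᵢ ∩ S₀`, `S` is the current state. -/
def IsRhoAux (R : Finset (Rule M)) (S₀ : Finset M) :
    Finset M → Finset M → Finset M → List (Rule M) → Prop
  | _, _, _, [] => True
  | Xs, Us, S, r :: rs =>
      r ∈ R ∧ r.premises ⊆ S ∧
      (r.concl ∈ S → r.concl ∈ S₀ ∧ r.concl ∉ Xs ∧ r.concl ∉ Us) ∧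
      IsRhoAux R S₀ (insert r.concl Xs) (Us ∪ (r.premises ∩ S₀)) (insert r.concl S) rs

/-- A ρ-path from `S₀` in `Gr((R,S₀))`. -/
def IsRhoPath (R : Finset (Rule M)) (S₀ : Finset M) (rs : List (Rule M)) : Prop :=
  IsRhoAux R S₀ ∅ ∅ S₀ rs

/-- `Ŝ₁ ∪ ⋯ ∪ Ŝ_m`: the union of the parts of `S₀` used by the transitions of the path. -/
def hatUnion (S₀ : Finset M) (rs : List (Rule M)) : Finset M :=
  rs.foldr (fun r acc => (r.premises ∩ S₀) ∪ acc) ∅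

/-- `𝒰(p) = (Ŝ₁ ∪ ⋯ ∪ Ŝ_m) \ {X₁,…,X_m}`. -/
def usedMet (S₀ : Finset M) (rs : List (Rule M)) : Finset M :=
  hatUnion S₀ rs \ (rs.map Rule.concl).toFinset

end Paths


/-!
Let `rank c` be the least height of an explanation for `c`, and fix for every derivable `c` an
explanation `minExpl c` of that height. The roots of its children have strictly smaller rank, so by
well-founded recursion on the rank we may replace each child by the canonical explanation of its
root. Every subexplanation of the resulting tree `canonExpl c` is `canonExpl` of its own root, so
two subexplanations with the same root coincide.
-/

namespace Expl

variable {M : Type}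

def height : Expl M → ℕ
  | leaf _ => 0
  | node1 _ e => e.height + 1
  | node2 _ e₁ e₂ => max e₁.height e₂.height + 1

def children : Expl M → List (Expl M)
  | leaf _ => []
  | node1 _ e => [e]
  | node2 _ e₁ e₂ => [e₁, e₂]

def graft (f : M → Expl M) : Expl M → Expl M
  | leaf c => leaf c
  | node1 r e => node1 r (f e.root)
  | node2 r e₁ e₂ => node2 r (f e₁.root) (f e₂.root)

lemma height_lt_of_mem_children {d E : Expl M} (h : d ∈ E.children) :
    d.height < E.height := by
  cases E <;> simp only [children, List.mem_cons, List.not_mem_nil, or_false] at h <;>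
    rcases h with rfl | rfl <;> simp only [height] <;> omega

@[simp]
lemma root_graft (f : M → Expl M) (E : Expl M) : (E.graft f).root = E.root := by
  cases E <;> rfl

lemma graft_congr {f g : M → Expl M} {E : Expl M}
    (h : ∀ d ∈ E.children, f d.root = g d.root) : E.graft f = E.graft g := by
  cases E <;> simp_all [graft, children]

lemma eq_or_sub_of_sub_graft {f : M → Expl M} {E e : Expl M} (h : Sub e (E.graft f)) :
    e = E.graft f ∨ ∃ d ∈ E.children, Sub e (f d.root) := by
  cases E <;> cases h <;> simp_all [graft, children]

end Expl

namespace IsExpl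

variable {M : Type} {S : Finset M} {R : Finset (Rule M)} {c : M} {E : Expl M}

lemma root_eq (h : IsExpl S R c E) : E.root = c := by
  cases h <;> rfl

lemma of_mem_children (h : IsExpl S R c E) {d : Expl M} (hd : d ∈ E.children) :
    IsExpl S R d.root d := by
  cases h <;> simp only [Expl.children, List.mem_cons, List.not_mem_nil, or_false] at hd <;>
    rcases hd with rfl | rfl <;> rwa [root_eq ‹_›]

lemma graft (h : IsExpl S R c E) {f : M → Expl M}
    (hf : ∀ d ∈ E.children, IsExpl S R d.root (f d.root)) : IsExpl S R c (E.graft f) := by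
  cases h with
  | leaf hc => exact .leaf hc
  | node1 hr he =>
    simp only [Expl.children, List.mem_singleton, forall_eq, Expl.graft, root_eq he] at hf ⊢
    exact .node1 hr hf
  | node2 hr he₁ he₂ =>
    simp only [Expl.children, List.mem_cons, List.not_mem_nil, or_false, forall_eq_or_imp,
      forall_eq, Expl.graft, root_eq he₁, root_eq he₂] at hf ⊢
    exact .node2 hr hf.1 hf.2

end IsExpl

section Canonical

variable {M : Type} (S : Finset M) (R : Finset (Rule M))

noncomputable def rank (c : M) : ℕ :=
  sInf {n | ∃ E : Expl M, IsExpl S R c E ∧ E.height = n}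

variable {S R}

lemma rank_le_height {c : M} {E : Expl M} (h : IsExpl S R c E) : rank S R c ≤ E.height :=
  Nat.sInf_le ⟨E, h, rfl⟩

lemma exists_isExpl_height_eq_rank {c : M} (h : ∃ E : Expl M, IsExpl S R c E) :
    ∃ E : Expl M, IsExpl S R c E ∧ E.height = rank S R c := by
  obtain ⟨E, hE⟩ := h
  exact Nat.sInf_mem (s := {n | ∃ E : Expl M, IsExpl S R c E ∧ E.height = n}) ⟨_, E, hE, rfl⟩

variable (S R)

open Classical in
noncomputable def minExpl (c : M) : Expl M :=
  if h : ∃ E : Expl M, IsExpl S R c E then (exists_isExpl_height_eq_rank h).choose else .leaf c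

variable {S R}

lemma isExpl_minExpl {c : M} (h : ∃ E : Expl M, IsExpl S R c E) :
    IsExpl S R c (minExpl S R c) := by
  rw [minExpl, dif_pos h]
  exact (exists_isExpl_height_eq_rank h).choose_spec.1

lemma root_minExpl (c : M) : (minExpl S R c).root = c := by
  by_cases h : ∃ E : Expl M, IsExpl S R c E
  · exact (isExpl_minExpl h).root_eq
  · rw [minExpl, dif_neg h]
    rfl

lemma rank_root_lt_of_mem_children_minExpl {c : M} {d : Expl M}
    (hd : d ∈ (minExpl S R c).children) : rank S R d.root < rank S R c := by
  by_cases h : ∃ E : Expl M, IsExpl S R c E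
  · have hmin : (minExpl S R c).height = rank S R c := by
      rw [minExpl, dif_pos h]
      exact (exists_isExpl_height_eq_rank h).choose_spec.2
    calc rank S R d.root ≤ d.height := rank_le_height ((isExpl_minExpl h).of_mem_children hd)
      _ < (minExpl S R c).height := Expl.height_lt_of_mem_children hd
      _ = rank S R c := hmin
  · simp [minExpl, dif_neg h, Expl.children] at hd

variable (S R)

/-- The guard only makes the recursion visibly well founded: it always holds (`canonExpl_eq`). -/
noncomputable def canonExpl (c : M) : Expl M :=
  (minExpl S R c).graft fun a => if rank S R a < rank S R c then canonExpl a else .leaf a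
termination_by rank S R c

lemma canonExpl_eq (c : M) : canonExpl S R c = (minExpl S R c).graft (canonExpl S R) := by
  rw [canonExpl]
  exact Expl.graft_congr fun d hd => if_pos (rank_root_lt_of_mem_children_minExpl hd)

variable {S R}

lemma isExpl_canonExpl {c : M} (h : ∃ E : Expl M, IsExpl S R c E) :
    IsExpl S R c (canonExpl S R c) := by
  induction hc : rank S R c using Nat.strong_induction_on generalizing c with
  | _ n ih =>
    rw [canonExpl_eq]
    refine (isExpl_minExpl h).graft fun d hd => ?_
    exact ih _ (hc ▸ rank_root_lt_of_mem_children_minExpl hd)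
      ⟨d, (isExpl_minExpl h).of_mem_children hd⟩ rfl

lemma eq_canonExpl_root_of_sub {c : M} {e : Expl M} (h : Expl.Sub e (canonExpl S R c)) :
    e = canonExpl S R e.root := by
  induction hc : rank S R c using Nat.strong_induction_on generalizing c with
  | _ n ih =>
    rw [canonExpl_eq] at h
    rcases Expl.eq_or_sub_of_sub_graft h with rfl | ⟨d, hd, hsub⟩
    · rw [Expl.root_graft, root_minExpl, canonExpl_eq]
    · exact ih _ (hc ▸ rank_root_lt_of_mem_children_minExpl hd) hsub rfl

lemma uniform_canonExpl (c : M) : (canonExpl S R c).Uniform := fun _ _ h₁ h₂ hroot => by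
  rw [eq_canonExpl_root_of_sub h₁, eq_canonExpl_root_of_sub h₂, hroot]

end Canonical

/-- there exists an explanation for `C` w.r.t. `S` and `R` iff
there exists a uniform explanation for `C` w.r.t. `S` and `R`. -/
theorem stmt0 {M : Type} (S : Finset M) (R : Finset (Rule M)) (C : M) :
    (∃ E : Expl M, IsExpl S R C E) ↔ (∃ E : Expl M, IsExpl S R C E ∧ E.Uniform) :=
  ⟨fun h => ⟨canonExpl S R C, isExpl_canonExpl h, uniform_canonExpl C⟩,
    fun ⟨E, hE, _⟩ => ⟨E, hE⟩⟩
end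

section
/- If rules r₁, r₂ ∈ R are mutually essential in S for a metabolite C, then every explanation E₁ for C with respect to S and R\{r₁} satisfies r₂ ∈ ℛ(E₁) and r₁ ∉ ℛ(E₁), every explanation E₂ for C with respect to S and R\{r₂} satisfies r₁ ∈ ℛ(E₂) and r₂ ∉ ℛ(E₂), and consequently every such E₁ is vicarious of every such E₂, i.e. ℛ(E₁) ≠ ℛ(E₂). -/
namespace IsExpl

variable {M : Type} {S : Finset M} {R : Finset (Rule M)} {C : M} {E : Expl M}

theorem rules_subset (h : IsExpl S R C E) : E.rules ⊆ ↑R := by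
  induction h <;> simp_all [Expl.rules, Set.union_subset_iff, Set.insert_subset_iff]

theorem notMem_rules [DecidableEq M] {r : Rule M} (h : IsExpl S (R.erase r) C E) :
    r ∉ E.rules := fun hr => by
  simpa using h.rules_subset hr

theorem erase [DecidableEq M] {r : Rule M} (h : IsExpl S R C E) (hr : r ∉ E.rules) :
    IsExpl S (R.erase r) C E := by
  induction h with
  | leaf hc => exact .leaf hc
  | node1 hmem _ ih =>
    simp only [Expl.rules, Set.mem_union, Set.mem_singleton_iff, not_or] at hr
    exact .node1 (Finset.mem_erase.mpr ⟨Ne.symm hr.1, hmem⟩) (ih hr.2)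
  | node2 hmem _ _ ih₁ ih₂ =>
    simp only [Expl.rules, Set.mem_union, Set.mem_singleton_iff, not_or] at hr
    exact .node2 (Finset.mem_erase.mpr ⟨Ne.symm hr.1.1, hmem⟩) (ih₁ hr.1.2) (ih₂ hr.2)

end IsExpl

namespace MutuallyEssential

variable {M : Type} [DecidableEq M] {S : Finset M} {R : Finset (Rule M)} {r₁ r₂ : Rule M} {C : M}

theorem symm (h : MutuallyEssential S R r₁ r₂ C) : MutuallyEssential S R r₂ r₁ C := by
  obtain ⟨h₁, h₂, h₁₂⟩ := h
  exact ⟨h₂, h₁, by rwa [Finset.erase_right_comm]⟩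

theorem mem_rules (h : MutuallyEssential S R r₁ r₂ C) {E : Expl M}
    (hE : IsExpl S (R.erase r₁) C E) : r₂ ∈ E.rules := by
  by_contra hr₂
  exact h.2.2 ⟨E, hE.erase hr₂⟩

end MutuallyEssential

theorem stmt2_general {M : Type} [DecidableEq M] (S : Finset M) (R : Finset (Rule M))
    (r₁ r₂ : Rule M) (C : M)
    (hme : MutuallyEssential S R r₁ r₂ C) :
    (∀ E₁ : Expl M, IsExpl S (R.erase r₁) C E₁ → r₂ ∈ E₁.rules ∧ r₁ ∉ E₁.rules) ∧
    (∀ E₂ : Expl M, IsExpl S (R.erase r₂) C E₂ → r₁ ∈ E₂.rules ∧ r₂ ∉ E₂.rules) ∧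
    (∀ E₁ E₂ : Expl M, IsExpl S (R.erase r₁) C E₁ → IsExpl S (R.erase r₂) C E₂ →
      E₁.rules ≠ E₂.rules) := by
  have h₁ : ∀ E : Expl M, IsExpl S (R.erase r₁) C E → r₂ ∈ E.rules ∧ r₁ ∉ E.rules :=
    fun _ hE => ⟨hme.mem_rules hE, hE.notMem_rules⟩
  have h₂ : ∀ E : Expl M, IsExpl S (R.erase r₂) C E → r₁ ∈ E.rules ∧ r₂ ∉ E.rules :=
    fun _ hE => ⟨hme.symm.mem_rules hE, hE.notMem_rules⟩
  exact ⟨h₁, h₂, fun E₁ E₂ hE₁ hE₂ heq => (h₂ E₂ hE₂).2 (heq ▸ (h₁ E₁ hE₁).1)⟩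

/-- mutually essential rules and vicarious explanations. -/
theorem stmt2 {M : Type} [DecidableEq M] (S : Finset M) (R : Finset (Rule M))
    (r₁ r₂ : Rule M) (C : M) (hr₁ : r₁ ∈ R) (hr₂ : r₂ ∈ R)
    (hme : MutuallyEssential S R r₁ r₂ C) :
    (∀ E₁ : Expl M, IsExpl S (R.erase r₁) C E₁ → r₂ ∈ E₁.rules ∧ r₁ ∉ E₁.rules) ∧
    (∀ E₂ : Expl M, IsExpl S (R.erase r₂) C E₂ → r₁ ∈ E₂.rules ∧ r₂ ∉ E₂.rules) ∧
    (∀ E₁ E₂ : Expl M, IsExpl S (R.erase r₁) C E₁ → IsExpl S (R.erase r₂) C E₂ →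
      E₁.rules ≠ E₂.rules) :=
  stmt2_general S R r₁ r₂ C hme
end

section
/- A metabolite B cannot be excluded for the production of a metabolite C (i.e., there is no explanation for C with respect to S\{B} and R) if and only if every explanation for C with respect to S and R contains the leaf B[] as a subexplanation. -/
namespace IsExpl

variable {M : Type} {S S' : Finset M} {R : Finset (Rule M)} {C : M} {E : Expl M}

theorem mono (hSS' : S ⊆ S') (h : IsExpl S R C E) : IsExpl S' R C E := by
  induction h with
  | leaf hc => exact .leaf (hSS' hc)
  | node1 hr _ ih => exact .node1 hr ih
  | node2 hr _ _ ih₁ ih₂ => exact .node2 hr ih₁ ih₂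

theorem mem_of_sub_leaf {b : M} (h : IsExpl S R C E) (hb : Expl.Sub (.leaf b) E) : b ∈ S := by
  induction h with
  | leaf hc => cases hb; exact hc
  | node1 _ _ ih => cases hb with | node1 hb => exact ih hb
  | node2 _ _ _ ih₁ ih₂ =>
    cases hb with
    | left hb => exact ih₁ hb
    | right hb => exact ih₂ hb

theorem erase_of_not_sub_leaf [DecidableEq M] {B : M} (h : IsExpl S R C E)
    (hB : ¬ Expl.Sub (.leaf B) E) : IsExpl (S.erase B) R C E := by
  induction h with
  | @leaf c hc =>
    refine .leaf (Finset.mem_erase.2 ⟨?_, hc⟩)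
    rintro rfl
    exact hB (.refl _)
  | node1 hr _ ih => exact .node1 hr (ih fun hs => hB (.node1 hs))
  | node2 hr _ _ ih₁ ih₂ =>
    exact .node2 hr (ih₁ fun hs => hB (.left hs)) (ih₂ fun hs => hB (.right hs))

end IsExpl

theorem isExpl_erase_iff {M : Type} [DecidableEq M] {S : Finset M} {R : Finset (Rule M)}
    {B C : M} {E : Expl M} :
    IsExpl (S.erase B) R C E ↔ IsExpl S R C E ∧ ¬ Expl.Sub (.leaf B) E :=
  ⟨fun h => ⟨h.mono (S.erase_subset B), fun hB => S.notMem_erase B (h.mem_of_sub_leaf hB)⟩,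
    fun h => h.1.erase_of_not_sub_leaf h.2⟩

theorem stmt3_general {M : Type} [DecidableEq M] (S : Finset M) (R : Finset (Rule M))
    (B C : M) :
    (¬ ∃ E : Expl M, IsExpl (S.erase B) R C E) ↔
    (∀ E : Expl M, IsExpl S R C E → Expl.Sub (Expl.leaf B) E) := by
  simp only [isExpl_erase_iff, not_exists, not_and, not_not]

/-- `B` cannot be excluded for the production of `C` iff every explanation
for `C` w.r.t. `S` and `R` contains the leaf `B[]` as a subexplanation. -/
theorem stmt3 {M : Type} [DecidableEq M] (S : Finset M) (R : Finset (Rule M))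
    (B C : M) (hB : B ∈ S) (hC : C ∉ S) :
    (¬ ∃ E : Expl M, IsExpl (S.erase B) R C E) ↔
    (∀ E : Expl M, IsExpl S R C E → Expl.Sub (Expl.leaf B) E) :=
  stmt3_general S R B C
end

section
/- Suppose C is the conclusion of rule r₂ ∈ R, C ∉ S, and r₂ is the unique rule of R whose conclusion is C. If r₁ causes r₂ (r₁ ⊑ r₂), then the conclusion A of r₁ is necessary for C, i.e. A ∈ ℳ(E) for every explanation E for C with respect to S and R. -/
/-- `Causes S R r₁ r₂` (`r₁ ⊑ r₂`): every explanation of the conclusion of `r₂` whose root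
is a node labelled `r₂` uses `r₁` in its immediate subexplanations. -/
def Causes {M : Type} (S : Finset M) (R : Finset (Rule M)) (r₁ r₂ : Rule M) : Prop :=
  (∀ E₁ E₂ : Expl M, IsExpl S R r₂.concl (Expl.node2 r₂ E₁ E₂) → r₁ ∈ E₁.rules ∪ E₂.rules) ∧
  (∀ E₁ : Expl M, IsExpl S R r₂.concl (Expl.node1 r₂ E₁) → r₁ ∈ E₁.rules)

namespace Expl

variable {M : Type}

theorem insert_mets_subset_mets_node1 (a c : M) (e : Expl M) :
    insert a e.mets ⊆ (node1 (.unary a c) e).mets := by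
  simp only [mets, Rule.premSet, Set.singleton_union, subset_refl]

theorem insert_mets_subset_mets_node2_left (a₁ a₂ c : M) (e₁ e₂ : Expl M) :
    insert a₁ e₁.mets ⊆ (node2 (.binary a₁ a₂ c) e₁ e₂).mets := by
  simp only [mets, Rule.premSet, Set.insert_union, Set.subset_def]
  grind

theorem insert_mets_subset_mets_node2_right (a₁ a₂ c : M) (e₁ e₂ : Expl M) :
    insert a₂ e₂.mets ⊆ (node2 (.binary a₁ a₂ c) e₁ e₂).mets := by
  simp only [mets, Rule.premSet, Set.insert_union, Set.subset_def]
  grind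

end Expl

theorem IsExpl.concl_mem_insert_mets_of_mem_rules {M : Type} {S : Finset M}
    {R : Finset (Rule M)} {A : M} {E : Expl M} {r : Rule M} (hE : IsExpl S R A E)
    (hr : r ∈ E.rules) : r.concl ∈ insert A E.mets := by
  induction hE with
  | leaf _ => simp [Expl.rules] at hr
  | @node1 a c e _ _ ih =>
    obtain rfl | hr := hr
    · exact Set.mem_insert _ _
    · exact Set.mem_insert_of_mem _ (Expl.insert_mets_subset_mets_node1 a c e (ih hr))
  | @node2 a₁ a₂ c e₁ e₂ _ _ _ ih₁ ih₂ =>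
    obtain (rfl | hr) | hr := hr
    · exact Set.mem_insert _ _
    · exact Set.mem_insert_of_mem _
        (Expl.insert_mets_subset_mets_node2_left a₁ a₂ c e₁ e₂ (ih₁ hr))
    · exact Set.mem_insert_of_mem _
        (Expl.insert_mets_subset_mets_node2_right a₁ a₂ c e₁ e₂ (ih₂ hr))

theorem stmt5_general {M : Type} (S : Finset M) (R : Finset (Rule M)) (r₁ r₂ : Rule M) (C : M)
    (hCS : C ∉ S)
    (huniq : ∀ r ∈ R, r.concl = C → r = r₂)
    (hcauses : Causes S R r₁ r₂) :
    ∀ E : Expl M, IsExpl S R C E → r₁.concl ∈ E.mets := by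
  intro E hE
  cases hE with
  | leaf hC => exact absurd hC hCS
  | @node1 a _ e hr he =>
    obtain rfl := huniq _ hr rfl
    have hr₁ : r₁ ∈ e.rules := hcauses.2 e (.node1 hr he)
    exact Expl.insert_mets_subset_mets_node1 a C e (he.concl_mem_insert_mets_of_mem_rules hr₁)
  | @node2 a₁ a₂ _ e₁ e₂ hr he₁ he₂ =>
    obtain rfl := huniq _ hr rfl
    obtain hr₁ | hr₁ : r₁ ∈ e₁.rules ∪ e₂.rules := hcauses.1 e₁ e₂ (.node2 hr he₁ he₂)
    · exact Expl.insert_mets_subset_mets_node2_left a₁ a₂ C e₁ e₂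
        (he₁.concl_mem_insert_mets_of_mem_rules hr₁)
    · exact Expl.insert_mets_subset_mets_node2_right a₁ a₂ C e₁ e₂
        (he₂.concl_mem_insert_mets_of_mem_rules hr₁)

/-- if `C = concl r₂ ∉ S`, `r₂` is the unique rule of `R` concluding `C`, and
`r₁ ⊑ r₂`, then the conclusion of `r₁` is necessary for `C`. -/
theorem stmt5 {M : Type} (S : Finset M) (R : Finset (Rule M)) (r₁ r₂ : Rule M) (C : M)
    (hr₂ : r₂ ∈ R) (hconcl : r₂.concl = C) (hCS : C ∉ S)
    (huniq : ∀ r ∈ R, r.concl = C → r = r₂)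
    (hcauses : Causes S R r₁ r₂) :
    ∀ E : Expl M, IsExpl S R C E → r₁.concl ∈ E.mets :=
  stmt5_general S R r₁ r₂ C hCS huniq hcauses
end

section
/- (Correspondence) If p is a χ-path from S₀ in Gr((R,S₀)) leading to a metabolite C, with transition rules Θ₁,…,Θ_m, then there exists an explanation E for C with respect to S₀ and R whose set of used rules ℛ(E) is contained in {Θ₁,…,Θ_m}. -/
section Correspondence

variable {M : Type}

def ExplainableWithin (S₀ : Finset M) (R : Finset (Rule M)) (T : Set (Rule M)) (C : M) : Prop :=
  ∃ E : Expl M, IsExpl S₀ R C E ∧ E.rules ⊆ T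

theorem ExplainableWithin.of_mem {S₀ : Finset M} {R : Finset (Rule M)} {T : Set (Rule M)}
    {x : M} (hx : x ∈ S₀) : ExplainableWithin S₀ R T x :=
  ⟨.leaf x, .leaf hx, Set.empty_subset T⟩

variable [DecidableEq M]

theorem IsChiPath.isPath {R : Finset (Rule M)} {S : Finset M} {rs : List (Rule M)}
    (h : IsChiPath R S rs) : IsPath R S rs := by
  induction h with
  | nil S => exact .nil S
  | cons hrR hprem _ _ ih => exact .cons hrR hprem ih

theorem LeadsTo.mem_run {C : M} : ∀ {S : Finset M} {rs : List (Rule M)},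
    LeadsTo C S rs → C ∈ run S rs
  | _, [], h => nomatch h
  | _, [_], ⟨_, hc⟩ => by simp [run, hc]
  | _, _ :: _ :: _, ⟨_, h⟩ => (LeadsTo.mem_run h :)

namespace ExplainableWithin

variable {S₀ : Finset M} {R : Finset (Rule M)} {T : Set (Rule M)}

theorem concl {r : Rule M} (hrR : r ∈ R) (hrT : r ∈ T)
    (hprem : ∀ a ∈ r.premises, ExplainableWithin S₀ R T a) :
    ExplainableWithin S₀ R T r.concl := by
  cases r with
  | unary a c =>
    obtain ⟨E, hE, hET⟩ := hprem a (by simp [Rule.premises])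
    exact ⟨.node1 _ E, .node1 hrR hE, Set.union_subset (Set.singleton_subset_iff.2 hrT) hET⟩
  | binary a₁ a₂ c =>
    obtain ⟨E₁, hE₁, hET₁⟩ := hprem a₁ (by simp [Rule.premises])
    obtain ⟨E₂, hE₂, hET₂⟩ := hprem a₂ (by simp [Rule.premises])
    exact ⟨.node2 _ E₁ E₂, .node2 hrR hE₁ hE₂,
      Set.union_subset (Set.union_subset (Set.singleton_subset_iff.2 hrT) hET₁) hET₂⟩

theorem of_mem_run {S : Finset M} {rs : List (Rule M)} (hp : IsPath R S rs)
    (hT : ∀ r ∈ rs, r ∈ T) (hS : ∀ x ∈ S, ExplainableWithin S₀ R T x) :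
    ∀ x ∈ run S rs, ExplainableWithin S₀ R T x := by
  induction hp with
  | nil S => exact hS
  | @cons S r rs hrR hprem _ ih =>
    refine ih (fun r' hr' => hT r' (List.mem_cons_of_mem r hr')) fun y hy => ?_
    rcases Finset.mem_insert.1 hy with rfl | hy
    · exact concl hrR (hT r List.mem_cons_self) fun a ha => hS a (hprem ha)
    · exact hS y hy

end ExplainableWithin

end Correspondence

/-- Correspondence: if `rs` is a χ-path from `S₀` in `Gr((R,S₀))` leading
to `C`, then there is an explanation `E` for `C` w.r.t. `S₀` and `R` with `ℛ(E)` contained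
in the set of rules of the path. -/
theorem stmt6 {M : Type} [DecidableEq M] (R : Finset (Rule M)) (S₀ : Finset M) (C : M)
    (rs : List (Rule M)) (hχ : IsChiPath R S₀ rs) (hl : LeadsTo C S₀ rs) :
    ∃ E : Expl M, IsExpl S₀ R C E ∧ E.rules ⊆ {r : Rule M | r ∈ rs} :=
  ExplainableWithin.of_mem_run hχ.isPath (fun _ => id) (fun _ => .of_mem) C hl.mem_run
end

section
/- For every uniform explanation E for a metabolite C with respect to S₀ and R, there exists a path from S₀ in Gr((R,S₀)) whose final state contains C and whose set of transition rules equals ℛ(E). -/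
/-!
Listing the rules of an explanation in post-order gives the path: every rule is fired only
after the subexplanations of its premises have been fired, and since states only grow along a
path, those premises are still present when it fires.
-/

section PathLemmas

variable {M : Type} [DecidableEq M]

lemma run_append (S : Finset M) (l₁ l₂ : List (Rule M)) :
    run S (l₁ ++ l₂) = run (run S l₁) l₂ := by
  induction l₁ generalizing S with
  | nil => rfl
  | cons r rs ih => exact ih (insert r.concl S)

lemma run_concat (S : Finset M) (l : List (Rule M)) (r : Rule M) :
    run S (l ++ [r]) = insert r.concl (run S l) := by
  rw [run_append]; rfl

lemma subset_run (S : Finset M) (rs : List (Rule M)) : S ⊆ run S rs := by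
  induction rs generalizing S with
  | nil => exact subset_rfl
  | cons r rs ih => exact (Finset.subset_insert _ _).trans (ih (insert r.concl S))

lemma IsPath.append {R : Finset (Rule M)} {S : Finset M} {l₁ l₂ : List (Rule M)}
    (h₁ : IsPath R S l₁) (h₂ : IsPath R (run S l₁) l₂) : IsPath R S (l₁ ++ l₂) := by
  induction h₁ with
  | nil S => exact h₂
  | cons hr hprem _ ih => exact IsPath.cons hr hprem (ih h₂)

lemma IsPath.concat {R : Finset (Rule M)} {S : Finset M} {l : List (Rule M)} {r : Rule M}
    (hl : IsPath R S l) (hr : r ∈ R) (hprem : r.premises ⊆ run S l) :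
    IsPath R S (l ++ [r]) :=
  hl.append (.cons hr hprem (.nil _))

lemma IsExpl.exists_path {R : Finset (Rule M)} {S₀ : Finset M} {C : M} {E : Expl M}
    (hE : IsExpl S₀ R C E) {S : Finset M} (hS : S₀ ⊆ S) :
    ∃ rs : List (Rule M), IsPath R S rs ∧ C ∈ run S rs ∧ {r | r ∈ rs} = E.rules := by
  induction hE generalizing S with
  | leaf hc => exact ⟨[], .nil S, hS hc, by simp [Expl.rules]⟩
  | @node1 a c e hr _ ih =>
    obtain ⟨rs, hpath, ha, hrules⟩ := ih hS
    refine ⟨rs ++ [.unary a c], hpath.concat hr ?_, ?_, ?_⟩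
    · simpa [Rule.premises] using ha
    · rw [run_concat]
      exact Finset.mem_insert_self _ _
    · ext r
      simp [Expl.rules, ← hrules, or_comm]
  | @node2 a₁ a₂ c e₁ e₂ hr _ _ ih₁ ih₂ =>
    obtain ⟨rs₁, hpath₁, ha₁, hrules₁⟩ := ih₁ hS
    obtain ⟨rs₂, hpath₂, ha₂, hrules₂⟩ := ih₂ (hS.trans (subset_run S rs₁))
    have hprem : (Rule.binary a₁ a₂ c).premises ⊆ run (run S rs₁) rs₂ := by
      simpa [Rule.premises, Finset.insert_subset_iff] using ⟨subset_run _ rs₂ ha₁, ha₂⟩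
    refine ⟨rs₁ ++ rs₂ ++ [.binary a₁ a₂ c], ?_, ?_, ?_⟩
    · refine (hpath₁.append hpath₂).concat hr ?_
      rwa [run_append]
    · rw [run_concat]
      exact Finset.mem_insert_self _ _
    · ext r
      simp only [Set.mem_ofPred_eq, List.mem_append, List.mem_singleton, Expl.rules,
        Set.mem_union, Set.mem_singleton_iff, ← hrules₁, ← hrules₂]
      tauto

end PathLemmas

theorem stmt7_general {M : Type} [DecidableEq M] (R : Finset (Rule M)) (S₀ : Finset M) (C : M)
    (E : Expl M) (hE : IsExpl S₀ R C E) :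
    ∃ rs : List (Rule M), IsPath R S₀ rs ∧ C ∈ run S₀ rs ∧
      {r : Rule M | r ∈ rs} = E.rules :=
  hE.exists_path subset_rfl

/-- every uniform explanation `E` for `C` w.r.t. `S₀` and `R` yields a path
from `S₀` in `Gr((R,S₀))` whose final state contains `C` and whose set of transition rules
equals `ℛ(E)`. -/
theorem stmt7 {M : Type} [DecidableEq M] (R : Finset (Rule M)) (S₀ : Finset M) (C : M)
    (E : Expl M) (hE : IsExpl S₀ R C E) (hU : E.Uniform) :
    ∃ rs : List (Rule M), IsPath R S₀ rs ∧ C ∈ run S₀ rs ∧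
      {r : Rule M | r ∈ rs} = E.rules :=
  stmt7_general R S₀ C E hE
end

section
/- In any ρ-path S₀ →_{Θ₁,Ŝ₁,X₁} S₁ → ⋯ →_{Θ_m,Ŝ_m,X_m} S_m from S₀ in Gr((R,S₀)), the produced metabolites X₁,…,X_m are pairwise distinct; consequently, if the type M of metabolites is finite, every ρ-path has length at most |M|. -/
namespace IsRhoAux

variable {M : Type} [DecidableEq M] {R : Finset (Rule M)} {S₀ Xs Us S : Finset M}

/-- Condition (ii) forbids a self-loop from reproducing an earlier `Xᵢ`, and a proper transition
produces a metabolite outside the current state, which contains every earlier `Xᵢ`. -/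
theorem concl_notMem {r : Rule M} {rs : List (Rule M)} (h : IsRhoAux R S₀ Xs Us S (r :: rs))
    (hXs : Xs ⊆ S) : r.concl ∉ Xs := by
  obtain ⟨-, -, hselfLoop, -⟩ := h
  by_cases hS : r.concl ∈ S
  · exact (hselfLoop hS).2.1
  · exact fun hX => hS (hXs hX)

theorem nodup_map_concl_and_notMem {rs : List (Rule M)} (h : IsRhoAux R S₀ Xs Us S rs)
    (hXs : Xs ⊆ S) :
    (rs.map Rule.concl).Nodup ∧ ∀ x ∈ rs.map Rule.concl, x ∉ Xs := by
  induction rs generalizing Xs Us S with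
  | nil => simp
  | cons r rs ih =>
    have hr := h.concl_notMem hXs
    obtain ⟨hnodup, hfresh⟩ := ih h.2.2.2 (Finset.insert_subset_insert r.concl hXs)
    refine ⟨List.nodup_cons.2 ⟨fun hmem => hfresh _ hmem (Finset.mem_insert_self _ _), hnodup⟩, ?_⟩
    rintro x hx hxXs
    rcases List.mem_cons.1 hx with rfl | hx
    · exact hr hxXs
    · exact hfresh x hx (Finset.mem_insert_of_mem hxXs)

end IsRhoAux

theorem IsRhoPath.nodup_map_concl {M : Type} [DecidableEq M] {R : Finset (Rule M)}
    {S₀ : Finset M} {rs : List (Rule M)} (h : IsRhoPath R S₀ rs) :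
    (rs.map Rule.concl).Nodup :=
  (IsRhoAux.nodup_map_concl_and_notMem h (Finset.empty_subset S₀)).1

/-- in any ρ-path the produced metabolites are pairwise distinct; hence if
`M` is finite, every ρ-path has length at most `|M|`. -/
theorem stmt15 {M : Type} [DecidableEq M] (R : Finset (Rule M)) (S₀ : Finset M)
    (rs : List (Rule M)) (h : IsRhoPath R S₀ rs) :
    (rs.map Rule.concl).Nodup ∧ (∀ _ : Finite M, rs.length ≤ Nat.card M) := by
  refine ⟨h.nodup_map_concl, fun _ => ?_⟩
  simpa only [List.length_map] using h.nodup_map_concl.length_le_natCard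
end
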